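/- If X is a topological space with a k_ω-decomposition X = ⋃ₙ Kₙ and q : X → Y is a quotient map onto a Hausdorff space Y, then Y = ⋃ₙ q(Kₙ) is a k_ω-decomposition of Y. -/

import Mathlib

open Set Topology

theorem Set.preimage_inter_image_inter {α β : Type*} (f : α → β) (s : Set α) (t : Set β) :
    f ⁻¹' (t ∩ f '' s) ∩ s = f ⁻¹' t ∩ s := by
  ext x
  exact ⟨fun ⟨⟨hx, _⟩, hs⟩ => ⟨hx, hs⟩, fun ⟨hx, hs⟩ => ⟨⟨hx, x, hs, rfl⟩, hs⟩⟩

theorem Topology.IsQuotientMap.isClosed_iff_forall_isClosed_inter_image {X Y ι : Type*}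
    [TopologicalSpace X] [TopologicalSpace Y] {q : X → Y} (hq : IsQuotientMap q)
    {K : ι → Set X} (hK : ∀ A : Set X, IsClosed A ↔ ∀ i, IsClosed (A ∩ K i))
    (hqK : ∀ i, IsClosed (q '' K i)) (B : Set Y) :
    IsClosed B ↔ ∀ i, IsClosed (B ∩ q '' K i) := by
  refine ⟨fun hB i => hB.inter (hqK i), fun hB => ?_⟩
  rw [← hq.isClosed_preimage, hK]
  intro i
  rw [← preimage_inter_image_inter]
  exact (hK _).mp ((hB i).preimage hq.continuous) i

/-- If `X` has a `k_ω`-decomposition `X = ⋃ n, K n` and `q : X → Y` is a quotient map onto a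
Hausdorff space `Y`, then `(q '' K n)` is a `k_ω`-decomposition of `Y`. -/
theorem kOmega_of_quotient {X Y : Type*} [TopologicalSpace X] [TopologicalSpace Y] [T2Space Y]
    (q : X → Y) (hq : Topology.IsQuotientMap q) (K : ℕ → Set X) (hmono : Monotone K)
    (hcomp : ∀ n, IsCompact (K n)) (hunion : (⋃ n, K n) = Set.univ)
    (hclosed : ∀ A : Set X, IsClosed A ↔ ∀ n, IsClosed (A ∩ K n)) :
    Monotone (fun n => q '' K n) ∧ (∀ n, IsCompact (q '' K n)) ∧
      (⋃ n, q '' K n) = Set.univ ∧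
      ∀ B : Set Y, IsClosed B ↔ ∀ n, IsClosed (B ∩ q '' K n) := by
  have hqK : ∀ n, IsCompact (q '' K n) := fun n => (hcomp n).image hq.continuous
  refine ⟨fun m n hmn => image_mono (hmono hmn), hqK, ?_,
    hq.isClosed_iff_forall_isClosed_inter_image hclosed fun n => (hqK n).isClosed⟩
  rw [← image_iUnion, hunion, image_univ, hq.surjective.range_eq]
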